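/- arXiv:math/0604352 — 2 statements merged into one kernel-verified Lean document; each statement's English description precedes it below -/
import Mathlib

section
/- Let G = (V, E) be a graph on V = {1, …, n} with maximum degree r, fix β ≥ 0, and let σ be drawn from the Ising Gibbs measure P({σ}) = Z(β)^{-1} exp(β Σ_{{i,j} ∈ E} σ_i σ_j) on {-1,1}^n. For each i let m_i := Σ_{j : {i,j} ∈ E} σ_j, and for u ≥ 0 define S(u) := (1/n) Σ_{i=1}^n (σ_i - tanh(u m_i))². Then for every fixed u ≥ 0 and every t ≥ 0, P(S(β) ≥ S(u) + t) ≤ exp(-n t² / (128 (r + 1))). -/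
/-!
Write `n (S(β) - S(u)) = ∑ᵢ gᵢ` with `gᵢ = (σᵢ - tanh (β mᵢ))² - (σᵢ - tanh (u mᵢ))²`.
Given the other spins, `σᵢ = ±1` with probabilities `(1 ± tanh (β mᵢ)) / 2`; under this law `gᵢ`
has mean `-(tanh (β mᵢ) - tanh (u mᵢ))² ≤ 0` and its centred values lie in `[-8, 8]`, so
Hoeffding's lemma bounds its conditional moment generating function by `exp (32 θ²)`. As `gⱼ` only
depends on `σⱼ` and the spins next to `j`, peeling off the sites of an independent set `C` one at a
time gives `E exp (θ ∑_{i ∈ C} gᵢ) ≤ exp (32 θ² |C|)`. A greedy colouring splits the vertices into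
`r + 1` independent sets, Hölder's inequality recombines them into
`E exp (θ ∑ᵢ gᵢ) ≤ exp (32 (r + 1) n θ²)`, and Chernoff's bound with `θ = t / (64 (r + 1))`
finishes the proof.
-/

open Finset Real Function

theorem SimpleGraph.colorable_maxDegree_add_one {V : Type*} [Fintype V] (G : SimpleGraph V)
    [DecidableRel G.Adj] : G.Colorable (G.maxDegree + 1) := by
  classical
  suffices ∀ S : Finset V, ∃ κ : V → Fin (G.maxDegree + 1),
      ∀ i ∈ S, ∀ j ∈ S, G.Adj i j → κ i ≠ κ j by
    obtain ⟨κ, hκ⟩ := this univ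
    exact ⟨Coloring.mk κ fun hij => hκ _ (mem_univ _) _ (mem_univ _) hij⟩
  intro S
  induction S using Finset.induction_on with
  | empty => exact ⟨0, by simp⟩
  | insert v S hv ih =>
    obtain ⟨κ, hκ⟩ := ih
    have hcard : #((G.neighborFinset v).image κ) < #(univ : Finset (Fin (G.maxDegree + 1))) :=
      calc #((G.neighborFinset v).image κ) ≤ G.degree v := card_image_le
        _ < #(univ : Finset (Fin (G.maxDegree + 1))) := by
          simpa using Nat.lt_succ_of_le (G.degree_le_maxDegree v)
    obtain ⟨c, -, hc⟩ := exists_mem_notMem_of_card_lt_card hcard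
    have hfresh : ∀ j ∈ S, G.Adj v j → c ≠ κ j := fun j _ hvj hcj =>
      hc (mem_image.mpr ⟨j, (G.mem_neighborFinset v j).mpr hvj, hcj.symm⟩)
    refine ⟨update κ v c, ?_⟩
    simp only [mem_insert]
    rintro i (rfl | hi) j (rfl | hj) hij
    · exact (G.loopless.irrefl _ hij).elim
    · rw [update_self, update_of_ne (ne_of_mem_of_not_mem hj hv)]
      exact hfresh j hj hij
    · rw [update_self, update_of_ne (ne_of_mem_of_not_mem hi hv)]
      exact (hfresh i hi hij.symm).symm
    · rw [update_of_ne (ne_of_mem_of_not_mem hi hv), update_of_ne (ne_of_mem_of_not_mem hj hv)]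
      exact hκ i hi j hj hij

theorem DependsOn.apply_update {ι α β : Type*} [DecidableEq ι] {f : (ι → α) → β} {S : Set ι}
    (hf : DependsOn f S) {i : ι} (hi : i ∉ S) (s : ι → α) (a : α) :
    f (Function.update s i a) = f s :=
  hf fun _ hj => update_of_ne (ne_of_mem_of_not_mem hj hi) _ _

open MeasureTheory ProbabilityTheory in
theorem two_point_mgf_le {p y z M : ℝ} (t : ℝ) (hp0 : 0 ≤ p) (hp1 : p ≤ 1) (hy : |y| ≤ M)
    (hz : |z| ≤ M) (hmean : p * y + (1 - p) * z = 0) :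
    p * exp (t * y) + (1 - p) * exp (t * z) ≤ exp (M ^ 2 * t ^ 2 / 2) := by
  have hq : 0 ≤ 1 - p := by linarith
  let μ : Measure Bool :=
    ENNReal.ofReal p • Measure.dirac true + ENNReal.ofReal (1 - p) • Measure.dirac false
  have : IsProbabilityMeasure μ := ⟨by simp [μ, ← ENNReal.ofReal_add hp0 hq]⟩
  have hμ : ∀ f : Bool → ℝ, ∫ b, f b ∂μ = p * f true + (1 - p) * f false := fun f => by
    rw [integral_fintype .of_finite]
    simp [μ, measureReal_def, hp0, hq, add_comm]
  let X : Bool → ℝ := fun b => if b then y else z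
  have hX := (hasSubgaussianMGF_of_mem_Icc_of_integral_eq_zero (X := X) (μ := μ) (a := -M)
    (b := M) (by fun_prop) (ae_of_all _ fun b => by cases b <;> simp [X, ← abs_le, hy, hz])
    (by simpa [hμ, X] using hmean)).mgf_le t
  have hM : ((‖M - -M‖₊ / 2) ^ 2 : NNReal) = M ^ 2 := by
    simp [div_pow, sq_abs]
    ring
  simp only [mgf, hμ, hM] at hX
  simpa [X] using hX

theorem sum_filter_le_exp_mul_sum {α : Type*} [Fintype α] {w X : α → ℝ} (hw : ∀ x, 0 ≤ w x)
    (p : α → Prop) [DecidablePred p] {a θ : ℝ} (hθ : 0 ≤ θ) (hp : ∀ x, p x → a ≤ X x) :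
    ∑ x ∈ univ.filter p, w x ≤ exp (-(θ * a)) * ∑ x, w x * exp (θ * X x) := by
  rw [mul_sum]
  calc ∑ x ∈ univ.filter p, w x
      ≤ ∑ x ∈ univ.filter p, exp (-(θ * a)) * (w x * exp (θ * X x)) := by
        refine sum_le_sum fun x hx => ?_
        have h1 : 1 ≤ exp (-(θ * a)) * exp (θ * X x) := by
          rw [← exp_add]
          exact one_le_exp (by nlinarith [hp x (mem_filter.mp hx).2])
        nlinarith [hw x]
    _ ≤ ∑ x, exp (-(θ * a)) * (w x * exp (θ * X x)) :=
        sum_le_sum_of_subset_of_nonneg (subset_univ _) fun x _ _ => by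
          have := hw x; positivity

theorem sum_mul_exp_mean_le {α ι : Type*} [Fintype α] [Fintype ι] [Nonempty α] [Nonempty ι]
    {w : α → ℝ} (hw : ∀ x, 0 < w x) (f : ι → α → ℝ) :
    ∑ x, w x * exp ((∑ c, f c x) / Fintype.card ι)
      ≤ exp ((∑ c, log (∑ x, w x * exp (f c x))) / Fintype.card ι) := by
  set m : ℝ := (Fintype.card ι : ℝ)
  have hm : 0 < m := by positivity
  set Z : ι → ℝ := fun c => ∑ x, w x * exp (f c x)
  have hZ : ∀ c, 0 < Z c := fun c => sum_pos (fun x _ => mul_pos (hw x) (exp_pos _)) univ_nonempty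
  set L := (∑ c, log (Z c)) / m
  -- Jensen for `exp`, with the partition functions `Z c` as normalisers
  have hjensen : ∀ x, exp ((∑ c, f c x) / m) ≤ exp L * ∑ c, m⁻¹ * (exp (f c x) / Z c) := by
    intro x
    have h := convexOn_exp.map_sum_le (t := univ) (w := fun _ => m⁻¹)
      (p := fun c => f c x - log (Z c)) (fun _ _ => by positivity)
      (by simp [m, hm.ne']) (fun _ _ => Set.mem_univ _)
    simp only [smul_eq_mul, exp_sub, exp_log (hZ _)] at h
    calc exp ((∑ c, f c x) / m) = exp L * exp (∑ c, m⁻¹ * (f c x - log (Z c))) := by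
          rw [← exp_add, ← mul_sum, sum_sub_distrib]; congr 1; ring
      _ ≤ exp L * ∑ c, m⁻¹ * (exp (f c x) / Z c) := by gcongr
  calc ∑ x, w x * exp ((∑ c, f c x) / m)
      ≤ ∑ x, w x * (exp L * ∑ c, m⁻¹ * (exp (f c x) / Z c)) :=
        sum_le_sum fun x _ => mul_le_mul_of_nonneg_left (hjensen x) (hw x).le
    _ = exp L * ∑ c, m⁻¹ * ((∑ x, w x * exp (f c x)) / Z c) := by
        simp only [mul_sum, sum_div]
        rw [sum_comm]
        refine sum_congr rfl fun c _ => sum_congr rfl fun x _ => by ring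
    _ = exp L := by simp [Z, div_self (hZ _).ne', m, hm.ne']

theorem sq_loss_sub_two_point_mgf_le {a b t : ℝ} (ha : |a| ≤ 1) (hb : |b| ≤ 1) (ht : 0 ≤ t) :
    (1 + a) / 2 * exp (t * ((1 - a) ^ 2 - (1 - b) ^ 2))
      + (1 - a) / 2 * exp (t * ((-1 - a) ^ 2 - (-1 - b) ^ 2)) ≤ exp (32 * t ^ 2) := by
  obtain ⟨ha1, ha2⟩ := abs_le.mp ha
  obtain ⟨hb1, hb2⟩ := abs_le.mp hb
  -- the loss gap has mean `-(a - b) ^ 2`; centred, its two values are bounded by 8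
  have hcentred := two_point_mgf_le (p := (1 + a) / 2) (y := -2 * (1 - a) * (a - b))
    (z := 2 * (1 + a) * (a - b)) (M := 8) t (by linarith) (by linarith)
    (abs_le.mpr ⟨by nlinarith, by nlinarith⟩) (abs_le.mpr ⟨by nlinarith, by nlinarith⟩) (by ring)
  have hdrift : exp (t * -(a - b) ^ 2) ≤ 1 :=
    exp_le_one_iff.mpr (mul_nonpos_of_nonneg_of_nonpos ht (neg_nonpos.mpr (sq_nonneg _)))
  have hplus : exp (t * ((1 - a) ^ 2 - (1 - b) ^ 2))
      = exp (t * -(a - b) ^ 2) * exp (t * (-2 * (1 - a) * (a - b))) := by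
    rw [← exp_add]; ring_nf
  have hminus : exp (t * ((-1 - a) ^ 2 - (-1 - b) ^ 2))
      = exp (t * -(a - b) ^ 2) * exp (t * (2 * (1 + a) * (a - b))) := by
    rw [← exp_add]; ring_nf
  calc (1 + a) / 2 * exp (t * ((1 - a) ^ 2 - (1 - b) ^ 2))
        + (1 - a) / 2 * exp (t * ((-1 - a) ^ 2 - (-1 - b) ^ 2))
      = exp (t * -(a - b) ^ 2) * ((1 + a) / 2 * exp (t * (-2 * (1 - a) * (a - b)))
        + (1 - (1 + a) / 2) * exp (t * (2 * (1 + a) * (a - b)))) := by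
        rw [hplus, hminus]; ring
    _ ≤ exp (t * -(a - b) ^ 2) * exp (8 ^ 2 * t ^ 2 / 2) := by gcongr
    _ ≤ 1 * exp (8 ^ 2 * t ^ 2 / 2) := by gcongr
    _ = exp (32 * t ^ 2) := by ring_nf

theorem sq_loss_sub_gibbs_site_le {wT wF c b t : ℝ} (hwT : 0 ≤ wT) (hwF : 0 ≤ wF)
    (hgibbs : wT * exp (-c) = wF * exp c) (hb : |b| ≤ 1) (ht : 0 ≤ t) :
    wT * exp (t * ((1 - tanh c) ^ 2 - (1 - b) ^ 2))
      + wF * exp (t * ((-1 - tanh c) ^ 2 - (-1 - b) ^ 2)) ≤ exp (32 * t ^ 2) * (wT + wF) := by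
  -- `(1 ± tanh c) / 2` are the conditional probabilities of the two spin values
  have hcosh := cosh_pos c
  rw [← cosh_sub_sinh, ← cosh_add_sinh] at hgibbs
  have hT : wT = (1 + tanh c) / 2 * (wT + wF) := by
    rw [tanh_eq_sinh_div_cosh]; field_simp; linear_combination hgibbs
  have hF : wF = (1 - tanh c) / 2 * (wT + wF) := by
    rw [tanh_eq_sinh_div_cosh]; field_simp; linear_combination -hgibbs
  calc wT * exp (t * ((1 - tanh c) ^ 2 - (1 - b) ^ 2))
        + wF * exp (t * ((-1 - tanh c) ^ 2 - (-1 - b) ^ 2))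
      = (wT + wF) * ((1 + tanh c) / 2 * exp (t * ((1 - tanh c) ^ 2 - (1 - b) ^ 2))
        + (1 - tanh c) / 2 * exp (t * ((-1 - tanh c) ^ 2 - (-1 - b) ^ 2))) := by
        linear_combination exp (t * ((1 - tanh c) ^ 2 - (1 - b) ^ 2)) * hT
          + exp (t * ((-1 - tanh c) ^ 2 - (-1 - b) ^ 2)) * hF
    _ ≤ (wT + wF) * exp (32 * t ^ 2) := by
        gcongr
        exact sq_loss_sub_two_point_mgf_le (abs_tanh_lt_one c).le hb ht
    _ = exp (32 * t ^ 2) * (wT + wF) := mul_comm _ _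

section Configurations

variable {V : Type*} [Fintype V] [DecidableEq V]

theorem sum_update_true_add_update_false {M : Type*} [AddCommMonoid M] (i : V)
    (F : (V → Bool) → M) :
    ∑ s, (F (update s i true) + F (update s i false)) = 2 • ∑ s, F s := by
  have hflip : Involutive fun s : V → Bool => update s i (!s i) := fun s => by simp
  calc ∑ s, (F (update s i true) + F (update s i false))
      = ∑ s, (F s + F (update s i (!s i))) := sum_congr rfl fun s _ => by
        have hs : update s i (s i) = s := update_eq_self i s
        cases h : s i <;> rw [h] at hs <;> simp [hs, add_comm]
    _ = 2 • ∑ s, F s := by rw [sum_add_distrib, hflip.bijective.sum_comp F, two_nsmul]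

theorem sum_mul_exp_sum_le_pow {W : (V → Bool) → ℝ} {F : V → (V → Bool) → ℝ} {K : ℝ}
    (hK : 0 ≤ K) (C : Finset V)
    (hsite : ∀ i ∈ C, ∀ h : (V → Bool) → ℝ, DependsOn h {i}ᶜ → (∀ s, 0 ≤ h s) →
      ∑ s, W s * exp (F i s) * h s ≤ K * ∑ s, W s * h s)
    (hF : ∀ i ∈ C, ∀ j ∈ C, j ≠ i → DependsOn (F j) {i}ᶜ) :
    ∑ s, W s * exp (∑ i ∈ C, F i s) ≤ K ^ #C * ∑ s, W s := by
  induction C using Finset.induction_on with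
  | empty => simp
  | insert a C ha ih =>
    have hrest : DependsOn (fun s => exp (∑ j ∈ C, F j s)) {a}ᶜ := fun s s' hss' =>
      congrArg exp (sum_congr rfl fun j hj =>
        hF a (mem_insert_self a C) j (mem_insert_of_mem hj) (ne_of_mem_of_not_mem hj ha) hss')
    calc ∑ s, W s * exp (∑ i ∈ insert a C, F i s)
        = ∑ s, W s * exp (F a s) * exp (∑ j ∈ C, F j s) := by
          simp only [sum_insert ha, exp_add, mul_assoc]
      _ ≤ K * ∑ s, W s * exp (∑ j ∈ C, F j s) :=
          hsite a (mem_insert_self a C) _ hrest fun s => (exp_pos _).le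
      _ ≤ K * (K ^ #C * ∑ s, W s) := by
          gcongr
          exact ih (fun i hi => hsite i (mem_insert_of_mem hi))
            fun i hi j hj => hF i (mem_insert_of_mem hi) j (mem_insert_of_mem hj)
      _ = K ^ #(insert a C) * ∑ s, W s := by rw [card_insert_of_notMem ha, pow_succ]; ring

end Configurations

namespace Ising

def spin (b : Bool) : ℝ := if b then 1 else -1

@[simp] theorem spin_true : spin true = 1 := rfl

@[simp] theorem spin_false : spin false = -1 := rfl

section SingleSite

variable {V : Type*} [Fintype V] [DecidableEq V]

theorem sum_mul_exp_sq_loss_sub_mul_le (i : V) {W c b h : (V → Bool) → ℝ} (hW : ∀ s, 0 ≤ W s)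
    (hgibbs : ∀ s, W (update s i true) * exp (-c s) = W (update s i false) * exp (c s))
    (hc : DependsOn c {i}ᶜ) (hb : DependsOn b {i}ᶜ) (hb1 : ∀ s, |b s| ≤ 1)
    (hh : DependsOn h {i}ᶜ) (hh0 : ∀ s, 0 ≤ h s) {t : ℝ} (ht : 0 ≤ t) :
    ∑ s, W s * exp (t * ((spin (s i) - tanh (c s)) ^ 2 - (spin (s i) - b s) ^ 2)) * h s
      ≤ exp (32 * t ^ 2) * ∑ s, W s * h s := by
  have hi : i ∉ ({i}ᶜ : Set V) := by simp
  have hpair : ∀ s, W (update s i true) * exp (t * ((1 - tanh (c s)) ^ 2 - (1 - b s) ^ 2)) * h s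
      + W (update s i false) * exp (t * ((-1 - tanh (c s)) ^ 2 - (-1 - b s) ^ 2)) * h s
      ≤ exp (32 * t ^ 2) * (W (update s i true) * h s + W (update s i false) * h s) := fun s => by
    have := mul_le_mul_of_nonneg_right (sq_loss_sub_gibbs_site_le (hW (update s i true))
      (hW (update s i false)) (hgibbs s) (hb1 s) ht) (hh0 s)
    linarith
  have hsum := sum_le_sum fun s (_ : s ∈ univ) => hpair s
  have hlhs := sum_update_true_add_update_false i
    fun s => W s * exp (t * ((spin (s i) - tanh (c s)) ^ 2 - (spin (s i) - b s) ^ 2)) * h s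
  have hrhs := sum_update_true_add_update_false i fun s => W s * h s
  simp only [update_self, spin_true, spin_false, hc.apply_update hi, hb.apply_update hi,
    hh.apply_update hi] at hlhs hrhs
  rw [← mul_sum, hlhs, hrhs, two_nsmul, two_nsmul] at hsum
  linarith

end SingleSite

section Graph

variable {V : Type*} [Fintype V] (G : SimpleGraph V) [DecidableRel G.Adj]

def localField (s : V → Bool) (i : V) : ℝ :=
  ∑ j ∈ G.neighborFinset i, spin (s j)

noncomputable def sqLoss (u : ℝ) (s : V → Bool) (i : V) : ℝ :=
  (spin (s i) - tanh (u * localField G s i)) ^ 2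

theorem localField_dependsOn (i : V) :
    DependsOn (fun s => localField G s i) (G.neighborSet i) := fun s s' h =>
  sum_congr rfl fun j hj => by rw [h j ((G.mem_neighborFinset i j).mp hj)]

theorem sqLoss_dependsOn (u : ℝ) (i : V) :
    DependsOn (fun s => sqLoss G u s i) (insert i (G.neighborSet i)) := fun s s' h => by
  simp only [sqLoss, h i (Set.mem_insert i _),
    localField_dependsOn G i fun j hj => h j (Set.mem_insert_of_mem i hj)]

variable [LinearOrder V]

def energy (s : V → Bool) : ℝ :=
  ∑ p ∈ univ.filter (fun p : V × V => G.Adj p.1 p.2 ∧ p.1 < p.2), spin (s p.1) * spin (s p.2)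

theorem energy_update_true_sub_update_false (s : V → Bool) (i : V) :
    energy G (update s i true) - energy G (update s i false) = 2 * localField G s i := by
  have hpair : ∀ a b, (if G.Adj a b ∧ a < b then
        spin (update s i true a) * spin (update s i true b)
          - spin (update s i false a) * spin (update s i false b) else 0)
      = (if a = i then (if G.Adj i b ∧ i < b then 2 * spin (s b) else 0) else 0)
        + (if b = i then (if G.Adj a i ∧ a < i then 2 * spin (s a) else 0) else 0) := by
    intro a b
    by_cases hab : G.Adj a b ∧ a < b
    · obtain ⟨hadj, hlt⟩ := hab
      rcases eq_or_ne a i with rfl | ha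
      · simp [hadj, hlt, hlt.ne']; ring
      rcases eq_or_ne b i with rfl | hb
      · simp [hadj, hlt, ha]; ring
      simp [hadj, hlt, ha, hb, update_of_ne]
    · rcases eq_or_ne a i with rfl | ha
      · simp [hab]
      rcases eq_or_ne b i with rfl | hb
      · simp [hab, ha]
      simp [hab, ha, hb]
  have hsplit : ∀ j, (if G.Adj i j ∧ i < j then 2 * spin (s j) else 0)
      + (if G.Adj j i ∧ j < i then 2 * spin (s j) else 0)
      = if G.Adj i j then 2 * spin (s j) else 0 := by
    intro j
    by_cases hij : G.Adj i j
    · rcases lt_trichotomy i j with h | h | h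
      · simp [hij, h, h.not_gt]
      · exact absurd h (G.ne_of_adj hij)
      · simp [hij, hij.symm, h, h.not_gt]
    · simp [hij, mt G.adj_symm hij]
  rw [energy, energy, ← sum_sub_distrib, sum_filter, Fintype.sum_prod_type]
  simp only [hpair, sum_add_distrib]
  rw [sum_comm (f := fun a b => if a = i then _ else 0)]
  simp only [sum_ite_eq', mem_univ, if_true]
  rw [← sum_add_distrib]
  simp only [hsplit, localField, mul_sum, ← sum_filter]
  rw [SimpleGraph.neighborFinset_eq_filter]

theorem exp_energy_update_true_mul (β : ℝ) (s : V → Bool) (i : V) :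
    exp (β * energy G (update s i true)) * exp (-(β * localField G s i))
      = exp (β * energy G (update s i false)) * exp (β * localField G s i) := by
  rw [← exp_add, ← exp_add]
  congr 1
  linear_combination β * energy_update_true_sub_update_false G s i

theorem sum_exp_energy_mul_exp_sum_sqLoss_sub_le_of_isIndepSet (β u : ℝ) {θ : ℝ} (hθ : 0 ≤ θ)
    {C : Finset V} (hC : G.IsIndepSet (C : Set V)) :
    ∑ s, exp (β * energy G s) * exp (∑ i ∈ C, θ * (sqLoss G β s i - sqLoss G u s i))
      ≤ exp (32 * θ ^ 2) ^ #C * ∑ s, exp (β * energy G s) := by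
  have hfield : ∀ i, DependsOn (fun s => localField G s i) {i}ᶜ := fun i =>
    (localField_dependsOn G i).mono fun j hj => (G.ne_of_adj hj).symm
  refine sum_mul_exp_sum_le_pow (exp_pos _).le C (fun i _ h hh hh0 => ?_) fun i hi j hj hji => ?_
  · exact sum_mul_exp_sq_loss_sub_mul_le i (fun s => (exp_pos _).le)
      (fun s => exp_energy_update_true_mul G β s i)
      (fun _ _ hss' => by simp only [hfield i hss']) (fun _ _ hss' => by simp only [hfield i hss'])
      (fun s => (abs_tanh_lt_one _).le) hh hh0 hθ
  · have hsub : insert j (G.neighborSet j) ⊆ {i}ᶜ := by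
      rintro k (rfl | hk) rfl
      · exact hji rfl
      · exact hC hj hi hji hk
    intro s s' hss'
    simp only [(sqLoss_dependsOn G β j).mono hsub hss', (sqLoss_dependsOn G u j).mono hsub hss']

theorem sum_exp_energy_mul_exp_sum_sqLoss_sub_le {α : Type*} [Fintype α] [DecidableEq α]
    [Nonempty α] (κ : G.Coloring α) (β u : ℝ) {θ : ℝ} (hθ : 0 ≤ θ) :
    ∑ s, exp (β * energy G s) * exp (θ * ∑ i, (sqLoss G β s i - sqLoss G u s i))
      ≤ exp (32 * Fintype.card α * Fintype.card V * θ ^ 2) * ∑ s, exp (β * energy G s) := by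
  set m : ℝ := (Fintype.card α : ℝ)
  have hm : 0 < m := by positivity
  set Z := ∑ s, exp (β * energy G s)
  have hZ : 0 < Z := sum_pos (fun s _ => exp_pos _) univ_nonempty
  set gap := fun s i => sqLoss G β s i - sqLoss G u s i
  -- split the sum over the colour classes, rescaled by `m` so that the total is their mean
  set f := fun c s => ∑ i ∈ univ.filter (κ · = c), m * θ * gap s i
  have hmean : ∀ s, θ * ∑ i, gap s i = (∑ c, f c s) / m := fun s => by
    rw [← sum_fiberwise univ κ]
    simp only [f, ← mul_sum]
    field_simp
  have hclass : ∀ c, log (∑ s, exp (β * energy G s) * exp (f c s))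
      ≤ 32 * (m * θ) ^ 2 * #(univ.filter (κ · = c)) + log Z := fun c => by
    have h := sum_exp_energy_mul_exp_sum_sqLoss_sub_le_of_isIndepSet G β u (mul_nonneg hm.le hθ)
      (C := univ.filter (κ · = c)) fun i hi j hj _ hij => κ.valid hij (by simp_all)
    have hpos : 0 < ∑ s, exp (β * energy G s) * exp (f c s) :=
      sum_pos (fun s _ => by positivity) univ_nonempty
    have := log_le_log hpos h
    rw [log_mul (by positivity) hZ.ne', log_pow, log_exp] at this
    linarith
  have hcard : ∑ c, (#(univ.filter (κ · = c)) : ℝ) = Fintype.card V := by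
    exact_mod_cast (card_eq_sum_card_fiberwise (f := κ) (fun x _ => mem_univ (κ x))).symm
  calc ∑ s, exp (β * energy G s) * exp (θ * ∑ i, gap s i)
      = ∑ s, exp (β * energy G s) * exp ((∑ c, f c s) / m) := by simp only [hmean]
    _ ≤ exp ((∑ c, log (∑ s, exp (β * energy G s) * exp (f c s))) / m) :=
        sum_mul_exp_mean_le (fun s => exp_pos _) f
    _ ≤ exp ((∑ c, (32 * (m * θ) ^ 2 * #(univ.filter (κ · = c)) + log Z)) / m) := by
        gcongr with c; exact hclass c
    _ = exp (32 * m * Fintype.card V * θ ^ 2) * Z := by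
        rw [sum_add_distrib, ← mul_sum, hcard, sum_const, card_univ, nsmul_eq_mul,
          show (32 * (m * θ) ^ 2 * Fintype.card V + m * log Z) / m
            = 32 * m * Fintype.card V * θ ^ 2 + log Z by field_simp,
          exp_add, exp_log hZ]

end Graph

end Ising

theorem ising_least_squares_tail_bound_general
    (n : ℕ)
    (G : SimpleGraph (Fin n)) [DecidableRel G.Adj] (r : ℕ) (hr : G.maxDegree = r)
    (β : ℝ)
    (σ : (Fin n → Bool) → Fin n → ℝ)
    (hσ : ∀ s i, σ s i = if s i then 1 else -1)
    (w : (Fin n → Bool) → ℝ)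
    (hw : ∀ s, w s = Real.exp (β *
      ∑ p ∈ Finset.univ.filter (fun p : Fin n × Fin n => G.Adj p.1 p.2 ∧ p.1 < p.2),
        σ s p.1 * σ s p.2))
    (mi : (Fin n → Bool) → Fin n → ℝ)
    (hmi : ∀ s i, mi s i = ∑ j ∈ G.neighborFinset i, σ s j)
    (S : (Fin n → Bool) → ℝ → ℝ)
    (hS : ∀ s u, S s u = (1 / n) * ∑ i, (σ s i - Real.tanh (u * mi s i)) ^ 2)
    (u : ℝ) (t : ℝ) (ht : 0 ≤ t) :
    (∑ s ∈ Finset.univ.filter (fun s : Fin n → Bool => S s u + t ≤ S s β), w s)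
      / (∑ s : Fin n → Bool, w s)
      ≤ Real.exp (-(n * t ^ 2) / (128 * (r + 1))) := by
  obtain rfl : σ = fun s i => Ising.spin (s i) := funext₂ hσ
  obtain rfl : mi = fun s i => Ising.localField G s i := funext₂ hmi
  obtain rfl : w = fun s => exp (β * Ising.energy G s) := funext hw
  obtain ⟨κ⟩ : G.Colorable (r + 1) := hr ▸ G.colorable_maxDegree_add_one
  set Z := ∑ s, exp (β * Ising.energy G s)
  set gap := fun s => ∑ i, (Ising.sqLoss G β s i - Ising.sqLoss G u s i)
  have hnS : ∀ s v, (n : ℝ) * S s v = ∑ i, Ising.sqLoss G v s i := fun s v => by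
    rw [hS]
    rcases n.eq_zero_or_pos with rfl | hn
    · simp
    · field_simp
      rfl
  have hevent : ∀ s, S s u + t ≤ S s β → n * t ≤ gap s := fun s hs => by
    simp only [gap, sum_sub_distrib, ← hnS]
    nlinarith [(n.cast_nonneg : (0 : ℝ) ≤ n)]
  -- minimises the Chernoff exponent `-θ n t + 32 (r + 1) n θ²`
  set θ := t / (64 * (r + 1))
  have hmgf : ∑ s, exp (β * Ising.energy G s) * exp (θ * gap s)
      ≤ exp (32 * (r + 1) * n * θ ^ 2) * Z := by
    simpa only [Fintype.card_fin, Nat.cast_add, Nat.cast_one] using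
      Ising.sum_exp_energy_mul_exp_sum_sqLoss_sub_le G κ β u (θ := θ) (by positivity)
  rw [div_le_iff₀ (sum_pos (fun s _ => exp_pos _) univ_nonempty)]
  calc _ ≤ exp (-(θ * (n * t))) * ∑ s, exp (β * Ising.energy G s) * exp (θ * gap s) :=
        sum_filter_le_exp_mul_sum (fun s => (exp_pos _).le) _ (by positivity) hevent
    _ ≤ exp (-(θ * (n * t))) * (exp (32 * (r + 1) * n * θ ^ 2) * Z) := by gcongr
    _ = exp (-(n * t ^ 2) / (128 * (r + 1))) * Z := by
        rw [← mul_assoc, ← exp_add]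
        congr 2
        simp only [θ]
        field_simp
        ring

/-- **Tail bound (2.2) for the least-squares criterion in the Ising model.**
For the Ising model `P({σ}) ∝ exp(β ∑_{{i,j}∈E} σ_i σ_j)` on a graph `G` on `{1,…,n}`
with maximum degree `r`, local fields `mᵢ = ∑_{j ∼ i} σ_j` and
`S(u) = (1/n) ∑ i, (σ_i - tanh(u mᵢ))²`, for every fixed `u ≥ 0` and `t ≥ 0` one has
`P(S(β) ≥ S(u) + t) ≤ exp(-n t²/(128(r+1)))`. Configurations are encoded by
`s : Fin n → Bool` with spins `σ s i = ±1`, and the probability of an event is its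
Gibbs weight divided by the total weight. -/
theorem ising_least_squares_tail_bound
    (n : ℕ) (hn : 1 ≤ n)
    (G : SimpleGraph (Fin n)) [DecidableRel G.Adj] (r : ℕ) (hr : G.maxDegree = r)
    (β : ℝ) (hβ : 0 ≤ β)
    (σ : (Fin n → Bool) → Fin n → ℝ)
    (hσ : ∀ s i, σ s i = if s i then 1 else -1)
    (w : (Fin n → Bool) → ℝ)
    (hw : ∀ s, w s = Real.exp (β *
      ∑ p ∈ Finset.univ.filter (fun p : Fin n × Fin n => G.Adj p.1 p.2 ∧ p.1 < p.2),
        σ s p.1 * σ s p.2))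
    (mi : (Fin n → Bool) → Fin n → ℝ)
    (hmi : ∀ s i, mi s i = ∑ j ∈ G.neighborFinset i, σ s j)
    (S : (Fin n → Bool) → ℝ → ℝ)
    (hS : ∀ s u, S s u = (1 / n) * ∑ i, (σ s i - Real.tanh (u * mi s i)) ^ 2)
    (u : ℝ) (hu : 0 ≤ u) (t : ℝ) (ht : 0 ≤ t) :
    (∑ s ∈ Finset.univ.filter (fun s : Fin n → Bool => S s u + t ≤ S s β), w s)
      / (∑ s : Fin n → Bool, w s)
      ≤ Real.exp (-(n * t ^ 2) / (128 * (r + 1))) :=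
  ising_least_squares_tail_bound_general n G r hr β σ hσ w hw mi hmi S hS u t ht
end

section
/- Let Y_1, …, Y_n be independent real-valued random variables with means μ_i = E(Y_i) and variances σ_i² = Var(Y_i), and suppose there are constants c_1, …, c_n with |Y_i - μ_i| ≤ c_i almost surely for each i. Let X = Σ_{i=1}^n Y_i. Then for every t ≥ 0, P(|X - E(X)| ≥ t) ≤ 2 exp(-t² / Σ_{i=1}^n (c_i² + σ_i²)). -/
open MeasureTheory ProbabilityTheory Real Set

/-! On `[-c, c]` the exponential lies below the quadratic that is tangent to it at `-c` and meets
it at `c`: writing `x = -c + u`, this is the monotonicity of `(exp u - 1 - u) / u ^ 2` on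
`(0, ∞)`. Integrating that quadratic against a centred `X` with `|X| ≤ c` and variance `v` gives
`𝔼[exp X] ≤ exp ((c² + v) / 4)`, and applying this to `t • X` shows that `X` is sub-Gaussian with
variance proxy `(c² + v) / 2`. The theorem is then the Chernoff bound for sums of independent
sub-Gaussian variables, applied to both tails. -/

lemma two_sub_mul_exp_le_two_add {u : ℝ} (hu : 0 ≤ u) : (2 - u) * exp u ≤ 2 + u := by
  have hmono : MonotoneOn (fun u ↦ (u - 2) * exp u + u) (Ici 0) := by
    refine monotoneOn_of_deriv_nonneg (convex_Ici 0) (by fun_prop) (by fun_prop) fun y _ ↦ ?_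
    have hd : HasDerivAt (fun u ↦ (u - 2) * exp u + u) (1 - (1 - y) * exp y) y := by
      refine ((((hasDerivAt_id y).sub_const 2).mul (hasDerivAt_exp y)).add
        (hasDerivAt_id y)).congr_deriv ?_
      simp only [id]; ring
    rw [hd.deriv, sub_nonneg]
    calc (1 - y) * exp y ≤ exp (-y) * exp y := by gcongr; exact one_sub_le_exp_neg y
      _ = 1 := by rw [← exp_add, neg_add_cancel, exp_zero]
  have := hmono self_mem_Ici (mem_Ici.2 hu) hu
  simp only [zero_sub, exp_zero, add_zero] at this
  linarith

lemma monotoneOn_exp_sub_one_sub_div_sq :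
    MonotoneOn (fun u ↦ (exp u - 1 - u) / u ^ 2) (Ioi 0) := by
  refine monotoneOn_of_deriv_nonneg (convex_Ioi 0) ?_ ?_ fun y hy ↦ ?_
  · exact ContinuousOn.div (by fun_prop) (by fun_prop) fun u hu ↦ pow_ne_zero 2 (ne_of_gt hu)
  · exact DifferentiableOn.div (by fun_prop) (by fun_prop) fun u hu ↦
      pow_ne_zero 2 (ne_of_gt (interior_subset hu))
  rw [interior_Ioi] at hy
  have hy0 : y ≠ 0 := ne_of_gt hy
  have hd : HasDerivAt (fun u ↦ (exp u - 1 - u) / u ^ 2)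
      (((y - 2) * exp y + y + 2) / y ^ 3) y := by
    refine ((((hasDerivAt_exp y).sub_const 1).sub (hasDerivAt_id y)).div
      (hasDerivAt_pow 2 y) (pow_ne_zero 2 hy0)).congr_deriv ?_
    simp only [Pi.sub_apply, id]
    field_simp
    ring
  rw [hd.deriv]
  have := two_sub_mul_exp_le_two_add hy.le
  exact div_nonneg (by nlinarith) (pow_pos hy 3).le

lemma exp_le_quadratic_of_abs_le {c x : ℝ} (hx : |x| ≤ c) :
    exp x ≤ exp (-c) *
      (1 + (x + c) + (exp (2 * c) - 1 - 2 * c) / (2 * c) ^ 2 * (x + c) ^ 2) := by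
  obtain ⟨hlo, hhi⟩ := abs_le.1 hx
  set u := x + c
  have hexp : exp x = exp (-c) * exp u := by rw [← exp_add]; simp only [u]; ring_nf
  rcases (show 0 ≤ u by linarith).eq_or_lt with hu | hu
  · rw [hexp, ← hu]; simp
  have h2c : 0 < 2 * c := by linarith
  have hmono := monotoneOn_exp_sub_one_sub_div_sq hu h2c (by linarith)
  simp only at hmono
  rw [hexp]
  gcongr
  have key : exp u = 1 + u + (exp u - 1 - u) / u ^ 2 * u ^ 2 := by
    field_simp; ring
  rw [key]
  gcongr

lemma cosh_le_two_mul_exp_sq_div_four_sub_one (c : ℝ) : cosh c ≤ 2 * exp (c ^ 2 / 4) - 1 := by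
  have hsq : cosh c = 2 * cosh (c / 2) ^ 2 - 1 := by
    have h2 := cosh_two_mul (c / 2)
    rw [mul_div_cancel₀ c two_ne_zero] at h2
    linear_combination h2 - cosh_sq (c / 2)
  have hhalf := cosh_le_exp_half_sq (c / 2)
  have hexp : exp ((c / 2) ^ 2 / 2) ^ 2 = exp (c ^ 2 / 4) := by
    rw [← exp_nat_mul]; ring_nf
  rw [hsq]
  nlinarith [cosh_pos (c / 2)]

lemma exp_neg_mul_quadratic_le {c v : ℝ} (hc : 0 ≤ c) (hv : 0 ≤ v) (hvc : v ≤ c ^ 2) :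
    exp (-c) * (1 + c + (exp (2 * c) - 1 - 2 * c) / (2 * c) ^ 2 * (c ^ 2 + v))
      ≤ exp ((c ^ 2 + v) / 4) := by
  rcases hc.eq_or_lt with rfl | hc
  · obtain rfl : v = 0 := by nlinarith
    simp
  set E := exp (c ^ 2 / 4)
  set φ := (exp (2 * c) - 1 - 2 * c) / (2 * c) ^ 2
  have hφ : exp (-c) * φ * c ^ 2 = (exp c - exp (-c) * (1 + 2 * c)) / 4 := by
    have hexp : exp (-c) * exp (2 * c) = exp c := by rw [← exp_add]; ring_nf
    have hφc : φ * c ^ 2 = (exp (2 * c) - 1 - 2 * c) / 4 := by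
      simp only [φ]; field_simp; ring
    linear_combination exp (-c) * hφc + hexp / 4
  have hcosh : exp (-c) * (1 + c + φ * c ^ 2) + exp (-c) * φ * c ^ 2 = cosh c := by
    rw [cosh_eq]; linear_combination 2 * hφ
  have hcosh_le := cosh_le_two_mul_exp_sq_div_four_sub_one c
  have h1c : exp (-c) * (1 + c) ≤ 1 := by
    calc exp (-c) * (1 + c) ≤ exp (-c) * exp c := by gcongr; linarith [add_one_le_exp c]
      _ = 1 := by rw [← exp_add, neg_add_cancel, exp_zero]
  have hE : E * (1 - c ^ 2 / 4) ≤ 1 := by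
    calc E * (1 - c ^ 2 / 4) ≤ E * exp (-(c ^ 2 / 4)) := by gcongr; exact one_sub_le_exp_neg _
      _ = 1 := by rw [← exp_add, add_neg_cancel, exp_zero]
  have hleft : exp (-c) * (1 + c + φ * c ^ 2) ≤ E := by linarith
  have hright : exp (-c) * (1 + c + φ * c ^ 2) + exp (-c) * φ * c ^ 2 ≤ E * (1 + c ^ 2 / 4) := by
    linarith
  have htangent : E * (1 + v / 4) ≤ exp ((c ^ 2 + v) / 4) := by
    rw [add_div, exp_add, add_comm 1]
    gcongr
    exact add_one_le_exp _
  -- The left side is affine in `v` and lies below the tangent line `E * (1 + v / 4)` of the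
  -- right side at both ends `v = 0` and `v = c ^ 2`.
  refine le_trans (le_of_mul_le_mul_left ?_ (pow_pos hc 2)) htangent
  nlinarith [mul_le_mul_of_nonneg_left hleft (sub_nonneg.2 hvc),
    mul_le_mul_of_nonneg_left hright hv]

section Probability

variable {Ω : Type*} [MeasurableSpace Ω] {μ : Measure Ω} [IsProbabilityMeasure μ] {X : Ω → ℝ}
  {c : ℝ}

lemma integral_exp_le_of_abs_le_of_integral_eq_zero (hm : AEMeasurable X μ)
    (hb : ∀ᵐ ω ∂μ, |X ω| ≤ c) (h0 : μ[X] = 0) :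
    μ[fun ω ↦ exp (X ω)] ≤ exp ((c ^ 2 + Var[X; μ]) / 4) := by
  have hc : 0 ≤ c := by
    obtain ⟨ω, hω⟩ := hb.exists
    exact (abs_nonneg _).trans hω
  have hIcc : ∀ᵐ ω ∂μ, X ω ∈ Icc (-c) c := hb.mono fun ω h ↦ abs_le.1 h
  have hX : Integrable X μ := .of_mem_Icc _ _ hm hIcc
  have hX2 : Integrable (fun ω ↦ X ω ^ 2) μ :=
    .of_mem_Icc 0 (c ^ 2) (hm.pow_const 2)
      (hb.mono fun ω h ↦ ⟨sq_nonneg _, by rw [← sq_abs]; gcongr⟩)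
  have hexp : Integrable (fun ω ↦ exp (X ω)) μ := by
    simpa using integrable_exp_mul_of_mem_Icc (t := 1) hm hIcc
  set φ := (exp (2 * c) - 1 - 2 * c) / (2 * c) ^ 2
  have hvar : Var[X; μ] = ∫ ω, X ω ^ 2 ∂μ := variance_of_integral_eq_zero hm h0
  have hquad : ∀ x : ℝ, exp (-c) * (1 + (x + c) + φ * (x + c) ^ 2)
      = exp (-c) * (1 + c + φ * c ^ 2) + exp (-c) * (1 + 2 * φ * c) * x
        + exp (-c) * φ * x ^ 2 := fun x ↦ by ring
  have haff : Integrable (fun ω ↦ exp (-c) * (1 + c + φ * c ^ 2)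
      + exp (-c) * (1 + 2 * φ * c) * X ω) μ := (integrable_const _).add (hX.const_mul _)
  calc ∫ ω, exp (X ω) ∂μ
      ≤ ∫ ω, exp (-c) * (1 + c + φ * c ^ 2) + exp (-c) * (1 + 2 * φ * c) * X ω
          + exp (-c) * φ * X ω ^ 2 ∂μ := by
        refine integral_mono_ae hexp ?_ (hb.mono fun ω h ↦ ?_)
        · exact haff.add (hX2.const_mul _)
        · exact (exp_le_quadratic_of_abs_le h).trans_eq (hquad (X ω))
    _ = exp (-c) * (1 + c + φ * (c ^ 2 + Var[X; μ])) := by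
        rw [integral_add haff (hX2.const_mul _),
          integral_add (integrable_const _) (hX.const_mul _), integral_const, integral_const_mul,
          integral_const_mul, h0, hvar]
        simp only [probReal_univ, one_smul]
        ring
    _ ≤ exp ((c ^ 2 + Var[X; μ]) / 4) :=
        exp_neg_mul_quadratic_le hc (variance_nonneg _ _)
          (by simpa using variance_le_sq_of_bounded hIcc hm)

lemma hasSubgaussianMGF_of_abs_le_of_integral_eq_zero (hm : AEMeasurable X μ)
    (hb : ∀ᵐ ω ∂μ, |X ω| ≤ c) (h0 : μ[X] = 0) :
    HasSubgaussianMGF X ((c ^ 2 + Var[X; μ]).toNNReal / 2) μ where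
  integrable_exp_mul t := integrable_exp_mul_of_mem_Icc hm (hb.mono fun ω h ↦ abs_le.1 h)
  mgf_le t := by
    have hbt : ∀ᵐ ω ∂μ, |t * X ω| ≤ |t| * c := hb.mono fun ω h ↦ by
      rw [abs_mul]; gcongr
    have h0t : μ[fun ω ↦ t * X ω] = 0 := by rw [integral_const_mul, h0, mul_zero]
    have hvar : Var[fun ω ↦ t * X ω; μ] = t ^ 2 * Var[X; μ] := variance_const_mul t X μ
    have hnonneg : 0 ≤ c ^ 2 + Var[X; μ] := add_nonneg (sq_nonneg c) (variance_nonneg X μ)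
    calc mgf X μ t ≤ exp (((|t| * c) ^ 2 + Var[fun ω ↦ t * X ω; μ]) / 4) :=
          integral_exp_le_of_abs_le_of_integral_eq_zero (hm.const_mul t) hbt h0t
      _ = exp (↑((c ^ 2 + Var[X; μ]).toNNReal / 2) * t ^ 2 / 2) := by
          rw [hvar, NNReal.coe_div, Real.coe_toNNReal _ hnonneg, mul_pow, sq_abs]
          push_cast
          ring_nf

lemma hasSubgaussianMGF_of_abs_sub_integral_le (hm : AEMeasurable X μ)
    (hb : ∀ᵐ ω ∂μ, |X ω - μ[X]| ≤ c) :
    HasSubgaussianMGF (fun ω ↦ X ω - μ[X]) ((c ^ 2 + Var[X; μ]).toNNReal / 2) μ := by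
  have hX : Integrable X μ :=
    .of_mem_Icc (μ[X] - c) (μ[X] + c) hm (hb.mono fun ω h ↦ by
      constructor <;> linarith [abs_le.1 h])
  rw [← variance_sub_const hm.aestronglyMeasurable μ[X]]
  refine hasSubgaussianMGF_of_abs_le_of_integral_eq_zero (hm.sub_const _) hb ?_
  rw [integral_sub hX (integrable_const _), integral_const, probReal_univ, one_smul, sub_self]

lemma measureReal_abs_sum_ge_le_of_iIndepFun {ι : Type*} {X : ι → Ω → ℝ}
    (h_indep : iIndepFun X μ) {c : ι → NNReal} {s : Finset ι}
    (h_subG : ∀ i ∈ s, HasSubgaussianMGF (X i) (c i) μ) {ε : ℝ} (hε : 0 ≤ ε) :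
    μ.real {ω | ε ≤ |∑ i ∈ s, X i ω|} ≤ 2 * exp (-ε ^ 2 / (2 * ∑ i ∈ s, c i)) := by
  have h_indep_neg : iIndepFun (fun i ↦ -X i) μ :=
    h_indep.comp (fun _ x ↦ -x) fun _ ↦ measurable_neg
  have hup := HasSubgaussianMGF.measure_sum_ge_le_of_iIndepFun h_indep h_subG hε
  have hdown := HasSubgaussianMGF.measure_sum_ge_le_of_iIndepFun h_indep_neg
    (fun i hi ↦ (h_subG i hi).neg) hε
  simp only [Pi.neg_apply, Finset.sum_neg_distrib] at hdown
  calc μ.real {ω | ε ≤ |∑ i ∈ s, X i ω|}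
      ≤ μ.real ({ω | ε ≤ ∑ i ∈ s, X i ω} ∪ {ω | ε ≤ -∑ i ∈ s, X i ω}) :=
        measureReal_mono fun ω (hω : ε ≤ _) ↦ le_abs.1 hω
    _ ≤ _ := (measureReal_union_le _ _).trans (by linarith)

end Probability

theorem hoeffding_type_inequality_general
    {Ω : Type*} [MeasurableSpace Ω] (μ : Measure Ω) [IsProbabilityMeasure μ]
    (n : ℕ) (Y : Fin n → Ω → ℝ)
    (hmeas : ∀ i, Measurable (Y i))
    (hindep : ProbabilityTheory.iIndepFun Y μ)
    (μY : Fin n → ℝ) (hμY : ∀ i, μY i = ∫ ω, Y i ω ∂μ)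
    (σ2 : Fin n → ℝ) (hσ2 : ∀ i, σ2 i = ProbabilityTheory.variance (Y i) μ)
    (c : Fin n → ℝ) (hc : ∀ i, ∀ᵐ ω ∂μ, |Y i ω - μY i| ≤ c i)
    (t : ℝ) (ht : 0 ≤ t) :
    (μ {ω | t ≤ |(∑ i, Y i ω) - ∑ i, μY i|}).toReal
      ≤ 2 * Real.exp (-t ^ 2 / ∑ i, (c i ^ 2 + σ2 i)) := by
  have hsubG : ∀ i ∈ Finset.univ, HasSubgaussianMGF (fun ω ↦ Y i ω - μY i)
      ((c i ^ 2 + σ2 i).toNNReal / 2) μ := fun i _ ↦ by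
    rw [hμY i, hσ2 i]
    exact hasSubgaussianMGF_of_abs_sub_integral_le (hmeas i).aemeasurable (hμY i ▸ hc i)
  have hindep_sub : iIndepFun (fun i ω ↦ Y i ω - μY i) μ :=
    hindep.comp (fun i x ↦ x - μY i) fun i ↦ measurable_id.sub_const _
  have hparam : 2 * ((∑ i, (c i ^ 2 + σ2 i).toNNReal / 2 : NNReal) : ℝ)
      = ∑ i, (c i ^ 2 + σ2 i) := by
    push_cast
    rw [Finset.mul_sum]
    refine Finset.sum_congr rfl fun i _ ↦ ?_
    rw [Real.coe_toNNReal _ (add_nonneg (sq_nonneg _) (hσ2 i ▸ variance_nonneg _ _))]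
    ring
  calc (μ {ω | t ≤ |(∑ i, Y i ω) - ∑ i, μY i|}).toReal
      = μ.real {ω | t ≤ |∑ i, (Y i ω - μY i)|} := by simp_rw [Finset.sum_sub_distrib]; rfl
    _ ≤ 2 * exp (-t ^ 2 / ∑ i, (c i ^ 2 + σ2 i)) := by
      rw [← hparam]
      exact measureReal_abs_sum_ge_le_of_iIndepFun hindep_sub hsubG ht

/-- **Hoeffding-type inequality for sums of bounded independent random variables.**
Let `Y 1, …, Y n` be independent square-integrable random variables with means `μᵢ`
and variances `σᵢ²`, such that `|Yᵢ - μᵢ| ≤ cᵢ` a.s. for each `i`. Then with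
`X = ∑ i, Y i`, for every `t ≥ 0`,
`P(|X - E X| ≥ t) ≤ 2 exp(-t² / ∑ i, (cᵢ² + σᵢ²))`. -/
theorem hoeffding_type_inequality
    {Ω : Type*} [MeasurableSpace Ω] (μ : Measure Ω) [IsProbabilityMeasure μ]
    (n : ℕ) (Y : Fin n → Ω → ℝ)
    (hmeas : ∀ i, Measurable (Y i))
    (hL2 : ∀ i, MemLp (Y i) 2 μ)
    (hindep : ProbabilityTheory.iIndepFun Y μ)
    (μY : Fin n → ℝ) (hμY : ∀ i, μY i = ∫ ω, Y i ω ∂μ)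
    (σ2 : Fin n → ℝ) (hσ2 : ∀ i, σ2 i = ProbabilityTheory.variance (Y i) μ)
    (c : Fin n → ℝ) (hc : ∀ i, ∀ᵐ ω ∂μ, |Y i ω - μY i| ≤ c i)
    (t : ℝ) (ht : 0 ≤ t) :
    (μ {ω | t ≤ |(∑ i, Y i ω) - ∑ i, μY i|}).toReal
      ≤ 2 * Real.exp (-t ^ 2 / ∑ i, (c i ^ 2 + σ2 i)) :=
  hoeffding_type_inequality_general μ n Y hmeas hindep μY hμY σ2 hσ2 c hc t ht
end
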